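/- arXiv:1312.5276 — 3 statements merged into one kernel-verified Lean document; each statement's English description precedes it below -/
import Mathlib

section
/- If X and Y are independent square-integrable real random variables, X has score ρ_X and Y has score ρ_Y, and W_t = √t·X + √(1−t)·Y for t ∈ (0,1), then ρ_t(w) := E[√t·ρ_X(X) + √(1−t)·ρ_Y(Y) | W_t = w] is a version of the score of W_t, i.e. E[ρ_t(W_t)·φ(W_t)] = −E[φ'(W_t)] for every smooth compactly supported test function φ. -/
open MeasureTheory ProbabilityTheory Real

lemma score_aux {Ω : Type*} [MeasurableSpace Ω] (μ : Measure Ω) [IsProbabilityMeasure μ]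
    (X Y : Ω → ℝ) (ρX : ℝ → ℝ) (hX : Measurable X) (hY : Measurable Y)
    (hρXm : Measurable ρX) (hρX1 : Integrable (fun ω => ρX (X ω)) μ)
    (hindep : IndepFun X Y μ)
    (hscoreX : ∀ φ : ℝ → ℝ, ContDiff ℝ (⊤ : ℕ∞) φ → HasCompactSupport φ →
      ∫ ω, ρX (X ω) * φ (X ω) ∂μ = -∫ ω, deriv φ (X ω) ∂μ)
    (a b : ℝ) (ha : a ≠ 0)
    (φ : ℝ → ℝ) (hφ : ContDiff ℝ (⊤ : ℕ∞) φ) (hs : HasCompactSupport φ) :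
    ∫ ω, ρX (X ω) * φ (a * X ω + b * Y ω) ∂μ
      = -a * ∫ ω, deriv φ (a * X ω + b * Y ω) ∂μ := by
  have hφc : Continuous φ := hφ.continuous
  have hφ'c : Continuous (deriv φ) := hφ.continuous_deriv (by simp)
  have hφ's : HasCompactSupport (deriv φ) := hs.deriv
  obtain ⟨C, hC⟩ := hs.exists_bound_of_continuous hφc
  obtain ⟨C', hC'⟩ := hφ's.exists_bound_of_continuous hφ'c
  set ν := μ.map X with hν
  set ξ := μ.map Y with hξ
  haveI : IsProbabilityMeasure ν := Measure.isProbabilityMeasure_map hX.aemeasurable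
  haveI : IsProbabilityMeasure ξ := Measure.isProbabilityMeasure_map hY.aemeasurable
  have hprod : μ.map (fun ω => (X ω, Y ω)) = ν.prod ξ :=
    (indepFun_iff_map_prod_eq_prod_map_map hX.aemeasurable hY.aemeasurable).mp hindep
  -- measurability of integrands
  have hFm : Measurable (fun p : ℝ × ℝ => ρX p.1 * φ (a * p.1 + b * p.2)) := by
    exact (hρXm.comp measurable_fst).mul
      (hφc.measurable.comp ((measurable_fst.const_mul a).add (measurable_snd.const_mul b)))
  have hGm : Measurable (fun p : ℝ × ℝ => deriv φ (a * p.1 + b * p.2)) := by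
    exact hφ'c.measurable.comp ((measurable_fst.const_mul a).add (measurable_snd.const_mul b))
  -- integrability on product
  have hρν : Integrable ρX ν := by
    rwa [hν, integrable_map_measure hρXm.aestronglyMeasurable hX.aemeasurable]
  have hρfst : Integrable (fun p : ℝ × ℝ => ρX p.1) (ν.prod ξ) := by
    have hm : Measurable fun p : ℝ × ℝ => ρX p.1 := hρXm.comp measurable_fst
    rw [← hprod, integrable_map_measure hm.aestronglyMeasurable (hX.prodMk hY).aemeasurable]
    exact hρX1
  have hF : Integrable (fun p : ℝ × ℝ => ρX p.1 * φ (a * p.1 + b * p.2)) (ν.prod ξ) := by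
    have := Integrable.bdd_mul (c := C) hρfst
      ((hφc.measurable.comp ((measurable_fst.const_mul a).add
        (measurable_snd.const_mul b))).aestronglyMeasurable) (by filter_upwards with p using hC _)
    exact this.congr (by filter_upwards with p; simp [Function.comp, mul_comm])
  have hG : Integrable (fun p : ℝ × ℝ => deriv φ (a * p.1 + b * p.2)) (ν.prod ξ) := by
    refine Integrable.mono' (integrable_const C') hGm.aestronglyMeasurable ?_
    filter_upwards with p using hC' _
  -- the inner score identity for fixed y
  have key : ∀ y : ℝ, ∫ x, ρX x * φ (a * x + b * y) ∂ν
      = -(a * ∫ x, deriv φ (a * x + b * y) ∂ν) := by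
    intro y
    set ψ : ℝ → ℝ := fun x => φ (a * x + b * y) with hψ
    have hψcd : ContDiff ℝ (⊤ : ℕ∞) ψ :=
      hφ.comp ((contDiff_const.mul contDiff_id).add contDiff_const)
    have hψcs : HasCompactSupport ψ := by
      have : ψ = φ ∘ ((Homeomorph.mulLeft₀ a ha).trans (Homeomorph.addRight (b * y))) := rfl
      rw [this]
      exact hs.comp_homeomorph _
    have hψd : ∀ x : ℝ, deriv ψ x = a * deriv φ (a * x + b * y) := by
      intro x
      have h1 : HasDerivAt (fun x : ℝ => a * x + b * y) a x := by
        simpa using ((hasDerivAt_id x).const_mul a).add_const (b * y)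
      have h2 : HasDerivAt φ (deriv φ (a * x + b * y)) (a * x + b * y) :=
        (hφ.differentiable (by simp) (a * x + b * y)).hasDerivAt
      have := (h2.comp x h1).deriv
      rw [show deriv ψ x = deriv (φ ∘ fun x => a * x + b * y) x from rfl, this]; ring
    have hsc := hscoreX ψ hψcd hψcs
    have h1 : ∫ x, ρX x * φ (a * x + b * y) ∂ν = ∫ ω, ρX (X ω) * ψ (X ω) ∂μ := by
      rw [hν, integral_map hX.aemeasurable]
      exact ((hρXm.mul (hφc.measurable.comp
        ((measurable_id.const_mul a).add measurable_const))).aestronglyMeasurable)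
    have h2 : ∫ x, deriv φ (a * x + b * y) ∂ν = ∫ ω, deriv φ (a * X ω + b * y) ∂μ := by
      rw [hν, integral_map hX.aemeasurable]
      exact (hφ'c.measurable.comp
        ((measurable_id.const_mul a).add measurable_const)).aestronglyMeasurable
    rw [h1, hsc, h2]
    have : ∀ ω, deriv ψ (X ω) = a * deriv φ (a * X ω + b * y) := fun ω => hψd (X ω)
    simp_rw [this]
    rw [integral_const_mul]
  -- assemble via Fubini
  have e1 : ∫ ω, ρX (X ω) * φ (a * X ω + b * Y ω) ∂μ
      = ∫ p : ℝ × ℝ, ρX p.1 * φ (a * p.1 + b * p.2) ∂(ν.prod ξ) := by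
    rw [← hprod, integral_map (hX.prodMk hY).aemeasurable hFm.aestronglyMeasurable]
  have e2 : ∫ ω, deriv φ (a * X ω + b * Y ω) ∂μ
      = ∫ p : ℝ × ℝ, deriv φ (a * p.1 + b * p.2) ∂(ν.prod ξ) := by
    rw [← hprod, integral_map (hX.prodMk hY).aemeasurable hGm.aestronglyMeasurable]
  rw [e1, e2, integral_prod_symm _ hF, integral_prod_symm _ hG]
  calc ∫ y, ∫ x, ρX x * φ (a * x + b * y) ∂ν ∂ξ
      = ∫ y, -(a * ∫ x, deriv φ (a * x + b * y) ∂ν) ∂ξ := by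
        exact integral_congr_ae (by filter_upwards with y using key y)
    _ = -a * ∫ y, ∫ x, deriv φ (a * x + b * y) ∂ν ∂ξ := by
        rw [integral_neg, integral_const_mul]; ring

/-- If `X, Y` are independent with scores `ρX, ρY`, then the conditional expectation
`E[√t ρX(X) + √(1-t) ρY(Y) | W_t]` is a version of the score of `W_t = √t X + √(1-t) Y`. -/
theorem stmt1 {Ω : Type*} [MeasurableSpace Ω] (μ : Measure Ω) [IsProbabilityMeasure μ]
    (X Y : Ω → ℝ) (ρX ρY : ℝ → ℝ) (hX : Measurable X) (hY : Measurable Y)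
    (hρXm : Measurable ρX) (hρYm : Measurable ρY)
    (hX2 : MemLp X 2 μ) (hY2 : MemLp Y 2 μ)
    (hXc : ∫ ω, X ω ∂μ = 0) (hYc : ∫ ω, Y ω ∂μ = 0)
    (hindep : IndepFun X Y μ)
    (hρX2 : MemLp (fun ω => ρX (X ω)) 2 μ) (hρY2 : MemLp (fun ω => ρY (Y ω)) 2 μ)
    (hscoreX : ∀ φ : ℝ → ℝ, ContDiff ℝ (⊤ : ℕ∞) φ → HasCompactSupport φ →
      ∫ ω, ρX (X ω) * φ (X ω) ∂μ = -∫ ω, deriv φ (X ω) ∂μ)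
    (hscoreY : ∀ φ : ℝ → ℝ, ContDiff ℝ (⊤ : ℕ∞) φ → HasCompactSupport φ →
      ∫ ω, ρY (Y ω) * φ (Y ω) ∂μ = -∫ ω, deriv φ (Y ω) ∂μ)
    (t : ℝ) (ht : t ∈ Set.Ioo (0 : ℝ) 1)
    (W : Ω → ℝ) (hW : W = fun ω => Real.sqrt t * X ω + Real.sqrt (1 - t) * Y ω)
    (ρt : Ω → ℝ)
    (hρt : ρt = MeasureTheory.condExp (MeasurableSpace.comap W (borel ℝ)) μ
      (fun ω => Real.sqrt t * ρX (X ω) + Real.sqrt (1 - t) * ρY (Y ω))) :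
    ∀ φ : ℝ → ℝ, ContDiff ℝ (⊤ : ℕ∞) φ → HasCompactSupport φ →
      ∫ ω, ρt ω * φ (W ω) ∂μ = -∫ ω, deriv φ (W ω) ∂μ := by
  intro φ hφ hs
  obtain ⟨ht0, ht1⟩ := ht
  have ht0' : (0:ℝ) < 1 - t := by linarith
  have hst : Real.sqrt t ≠ 0 := ne_of_gt (Real.sqrt_pos.mpr ht0)
  have hst' : Real.sqrt (1 - t) ≠ 0 := ne_of_gt (Real.sqrt_pos.mpr ht0')
  have hWmeas : Measurable W := by
    rw [hW]; exact (hX.const_mul _).add (hY.const_mul _)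
  have hbor : (borel ℝ) = (inferInstance : MeasurableSpace ℝ) :=
    (BorelSpace.measurable_eq (α := ℝ)).symm
  have hm : MeasurableSpace.comap W (borel ℝ) ≤ (inferInstance : MeasurableSpace Ω) := by
    rw [hbor]; exact hWmeas.comap_le
  have hWm : Measurable[MeasurableSpace.comap W (borel ℝ)] W := by
    rw [hbor]; exact measurable_iff_comap_le.mpr le_rfl
  haveI : SigmaFinite (μ.trim hm) := by
    have : IsFiniteMeasure (μ.trim hm) := isFiniteMeasure_trim hm
    infer_instance
  have hρX1 : Integrable (fun ω => ρX (X ω)) μ := hρX2.integrable one_le_two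
  have hρY1 : Integrable (fun ω => ρY (Y ω)) μ := hρY2.integrable one_le_two
  set f : Ω → ℝ := fun ω => Real.sqrt t * ρX (X ω) + Real.sqrt (1 - t) * ρY (Y ω) with hfdef
  have hf_int : Integrable f μ := (hρX1.const_mul _).add (hρY1.const_mul _)
  obtain ⟨C, hC⟩ := hs.exists_bound_of_continuous hφ.continuous
  have hφWm : Measurable fun ω => φ (W ω) := hφ.continuous.measurable.comp hWmeas
  have hφW_sm : StronglyMeasurable[MeasurableSpace.comap W (borel ℝ)] fun ω => φ (W ω) :=
    (hφ.continuous.measurable.comp hWm).stronglyMeasurable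
  have hfφ_int : Integrable ((fun ω => φ (W ω)) * f) μ :=
    hf_int.bdd_mul hφWm.aestronglyMeasurable (by filter_upwards with ω using hC _)
  have hce := condExp_stronglyMeasurable_mul_of_bound hm hφW_sm hf_int C
    (by filter_upwards with ω using hC _)
  -- Step 1: replace ρt by f
  have step1 : ∫ ω, ρt ω * φ (W ω) ∂μ = ∫ ω, f ω * φ (W ω) ∂μ := by
    calc ∫ ω, ρt ω * φ (W ω) ∂μ
        = ∫ ω, ((fun ω => φ (W ω)) * μ[f|MeasurableSpace.comap W (borel ℝ)]) ω ∂μ := by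
          rw [hρt]; congr 1; ext ω; simp [mul_comm]
      _ = ∫ ω, (μ[(fun ω => φ (W ω)) * f|MeasurableSpace.comap W (borel ℝ)]) ω ∂μ :=
          (integral_congr_ae hce).symm
      _ = ∫ ω, ((fun ω => φ (W ω)) * f) ω ∂μ := integral_condExp hm
      _ = ∫ ω, f ω * φ (W ω) ∂μ := by congr 1; ext ω; simp [mul_comm]
  -- integrability of the two summands
  have hA : Integrable (fun ω => ρX (X ω) * φ (W ω)) μ :=
    (hρX1.bdd_mul hφWm.aestronglyMeasurable
      (by filter_upwards with ω using hC _)).congr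
      (by filter_upwards with ω using mul_comm _ _)
  have hB : Integrable (fun ω => ρY (Y ω) * φ (W ω)) μ :=
    (hρY1.bdd_mul hφWm.aestronglyMeasurable
      (by filter_upwards with ω using hC _)).congr
      (by filter_upwards with ω using mul_comm _ _)
  -- Step 2: split
  have step2 : ∫ ω, f ω * φ (W ω) ∂μ
      = Real.sqrt t * ∫ ω, ρX (X ω) * φ (W ω) ∂μ
        + Real.sqrt (1 - t) * ∫ ω, ρY (Y ω) * φ (W ω) ∂μ := by
    rw [← integral_const_mul, ← integral_const_mul, ← integral_add
      ((hA.const_mul _)) ((hB.const_mul _))]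
    congr 1; ext ω; simp [hfdef]; ring
  -- Step 3: apply the auxiliary lemma
  have keyX := score_aux μ X Y ρX hX hY hρXm hρX1 hindep hscoreX
    (Real.sqrt t) (Real.sqrt (1 - t)) hst φ hφ hs
  have keyY := score_aux μ Y X ρY hY hX hρYm hρY1 hindep.symm hscoreY
    (Real.sqrt (1 - t)) (Real.sqrt t) hst' φ hφ hs
  have hcomm : ∀ ω, Real.sqrt (1 - t) * Y ω + Real.sqrt t * X ω
      = Real.sqrt t * X ω + Real.sqrt (1 - t) * Y ω := fun ω => add_comm _ _
  simp_rw [hcomm] at keyY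
  rw [hW] at step1 step2 ⊢
  simp only at step1 step2 keyX keyY ⊢
  rw [step1, step2, keyX, keyY]
  have h1 : Real.sqrt t * Real.sqrt t = t := Real.mul_self_sqrt ht0.le
  have h2 : Real.sqrt (1 - t) * Real.sqrt (1 - t) = 1 - t := Real.mul_self_sqrt ht0'.le
  set I := ∫ ω, deriv φ (Real.sqrt t * X ω + Real.sqrt (1 - t) * Y ω) ∂μ
  calc Real.sqrt t * (-Real.sqrt t * I) + Real.sqrt (1 - t) * (-Real.sqrt (1 - t) * I)
      = -((Real.sqrt t * Real.sqrt t) * I) - (Real.sqrt (1 - t) * Real.sqrt (1 - t)) * I := by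
        ring
    _ = -I := by rw [h1, h2]; ring
end

section
/- Let X be a centered real random variable with variance C > 0, and Z an independent Gaussian with variance C. Then for t ∈ (0,1), X_t = √t·X + √(1−t)·Z has score ρ_t(x) = −(1/(1−t))·C^{-1}·(x − √t·E[X | X_t = x]). -/
open MeasureTheory ProbabilityTheory Real NNReal ENNReal Set

lemma gsv_pdf_contDiff (C : ℝ≥0) : ContDiff ℝ (⊤ : ℕ∞) (gaussianPDFReal 0 C) := by
  rw [gaussianPDFReal_def]
  exact contDiff_const.mul
    ((((contDiff_id.sub contDiff_const).pow 2).neg.div_const _).exp)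

lemma gsv_pdf_hasDerivAt (C : ℝ≥0) (hC : (C : ℝ) ≠ 0) (x : ℝ) :
    HasDerivAt (gaussianPDFReal 0 C) (-(x / C) * gaussianPDFReal 0 C x) x := by
  have h1 : HasDerivAt (fun y : ℝ => -(y - 0) ^ 2 / (2 * (C : ℝ)))
      (-(2 * (x - 0)) / (2 * (C : ℝ))) x := by
    simpa using ((((hasDerivAt_id x).sub_const 0).pow 2).neg).div_const (2 * (C : ℝ))
  have h3 := (h1.exp).const_mul (√(2 * π * (C : ℝ)))⁻¹
  rw [gaussianPDFReal_def]
  refine h3.congr_deriv ?_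
  beta_reduce
  ring

lemma gsv_integral_deriv_zero (f : ℝ → ℝ) (hf : ContDiff ℝ 1 f)
    (h2f : HasCompactSupport f) : ∫ x, deriv f x = 0 := by
  have hi : Integrable (deriv f) :=
    (hf.continuous_deriv le_rfl).integrable_of_hasCompactSupport h2f.deriv
  rw [← intervalIntegral.integral_Iic_add_Ioi (b := 0) hi.integrableOn hi.integrableOn,
    h2f.integral_Iic_deriv_eq hf 0, h2f.integral_Ioi_deriv_eq hf 0]
  ring

lemma gsv_ibp_vol (C : ℝ≥0) (hC : 0 < C) (ψ : ℝ → ℝ) (hψ : ContDiff ℝ (⊤ : ℕ∞) ψ)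
    (hs : HasCompactSupport ψ) :
    ∫ x, gaussianPDFReal 0 C x * (x * ψ x) =
      C * ∫ x, gaussianPDFReal 0 C x * deriv ψ x := by
  have hC0 : (C : ℝ) ≠ 0 := by exact_mod_cast hC.ne'
  set p := gaussianPDFReal 0 C with hp
  have hpcd : ContDiff ℝ (⊤ : ℕ∞) p := gsv_pdf_contDiff C
  have hpcont : Continuous p := hpcd.continuous
  have hFcd : ContDiff ℝ 1 (fun x => ψ x * p x) := (hψ.of_le (by simp)).mul (hpcd.of_le (by simp))
  have hFcs : HasCompactSupport (fun x => ψ x * p x) := hs.mul_right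
  have hderiv : ∀ x, deriv (fun x => ψ x * p x) x
      = deriv ψ x * p x + ψ x * (-(x / C) * p x) := by
    intro x
    exact (((hψ.differentiable (by simp) x).hasDerivAt).mul (gsv_pdf_hasDerivAt C hC0 x)).deriv
  have h0 : ∫ x, (deriv ψ x * p x + ψ x * (-(x / C) * p x)) = 0 := by
    rw [← integral_congr_ae (ae_of_all _ hderiv)]
    exact gsv_integral_deriv_zero _ hFcd hFcs
  have hg1 : Integrable (fun x => deriv ψ x * p x) :=
    ((hψ.continuous_deriv (by simp)).mul hpcont).integrable_of_hasCompactSupport hs.deriv.mul_right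
  have hg2 : Integrable (fun x => ψ x * (-(x / C) * p x)) := by
    refine Continuous.integrable_of_hasCompactSupport ?_ hs.mul_right
    exact hψ.continuous.mul (((continuous_id.div_const _).neg).mul hpcont)
  rw [integral_add hg1 hg2] at h0
  have e1 : ∫ x, deriv ψ x * p x = ∫ x, p x * deriv ψ x := by
    congr 1; ext x; ring
  have e2 : ∫ x, ψ x * (-(x / C) * p x) = -(C : ℝ)⁻¹ * ∫ x, p x * (x * ψ x) := by
    rw [← integral_const_mul]
    congr 1; ext x; simp only [div_eq_mul_inv]; ring
  rw [e1, e2] at h0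
  have := h0
  field_simp at this ⊢
  linarith

lemma gsv_gauss_int (C : ℝ≥0) (hC : 0 < C) (f : ℝ → ℝ) :
    ∫ x, f x ∂(gaussianReal 0 C) = ∫ x, gaussianPDFReal 0 C x * f x := by
  rw [gaussianReal_of_var_ne_zero _ hC.ne']
  have h := integral_withDensity_eq_integral_smul (μ := volume)
    (f := fun x => (gaussianPDFReal 0 C x).toNNReal)
    (measurable_gaussianPDFReal 0 C).real_toNNReal f
  rw [show MeasureTheory.volume.withDensity (gaussianPDF 0 C)
      = MeasureTheory.volume.withDensity
        (fun x => ((gaussianPDFReal 0 C x).toNNReal : ℝ≥0∞)) from rfl, h]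
  congr 1; ext x
  rw [NNReal.smul_def, Real.coe_toNNReal _ (gaussianPDFReal_nonneg _ _ _), smul_eq_mul]

lemma gsv_gauss_ibp (C : ℝ≥0) (hC : 0 < C) (ψ : ℝ → ℝ) (hψ : ContDiff ℝ (⊤ : ℕ∞) ψ)
    (hs : HasCompactSupport ψ) :
    ∫ x, x * ψ x ∂(gaussianReal 0 C) = C * ∫ x, deriv ψ x ∂(gaussianReal 0 C) := by
  rw [gsv_gauss_int C hC, gsv_gauss_int C hC]
  exact gsv_ibp_vol C hC ψ hψ hs

lemma gsv_gauss_ibp_affine (C : ℝ≥0) (hC : 0 < C) (φ : ℝ → ℝ) (hφ : ContDiff ℝ (⊤ : ℕ∞) φ)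
    (hφs : HasCompactSupport φ) (a b : ℝ) (hb : b ≠ 0) :
    ∫ z, z * φ (a + b * z) ∂(gaussianReal 0 C)
      = ((C : ℝ) * b) * ∫ z, deriv φ (a + b * z) ∂(gaussianReal 0 C) := by
  set ψ : ℝ → ℝ := fun z => φ (a + b * z) with hψdef
  have hψcd : ContDiff ℝ (⊤ : ℕ∞) ψ :=
    hφ.comp (contDiff_const.add (contDiff_const.mul contDiff_id))
  have hψs : HasCompactSupport ψ := by
    let e : Homeomorph ℝ ℝ := (Homeomorph.mulLeft₀ b hb).trans (Homeomorph.addLeft a)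
    have he : φ ∘ e = ψ := rfl
    have := hφs.comp_homeomorph e
    rwa [he] at this
  have hψd : ∀ z, deriv ψ z = b * deriv φ (a + b * z) := by
    intro z
    have h1 : HasDerivAt (fun z : ℝ => a + b * z) b z := by
      simpa using ((hasDerivAt_id z).const_mul b).const_add a
    have h2 : HasDerivAt ψ (deriv φ (a + b * z) * b) z :=
      ((hφ.differentiable (by simp) (a + b * z)).hasDerivAt).comp z h1
    rw [h2.deriv]; ring
  rw [gsv_gauss_ibp C hC ψ hψcd hψs]
  rw [integral_congr_ae (ae_of_all _ hψd), integral_const_mul]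
  ring

lemma gsv_integrable_id_gauss (C : ℝ≥0) (hC : 0 < C) :
    Integrable (fun x : ℝ => x) (gaussianReal 0 C) := by
  have hC0 : (0 : ℝ) < (C : ℝ) := by exact_mod_cast hC
  rw [gaussianReal_of_var_ne_zero _ hC.ne',
    integrable_withDensity_iff (measurable_gaussianPDF 0 C)
      (ae_of_all _ fun x => ENNReal.ofReal_lt_top)]
  have key : Integrable (fun x : ℝ => x * rexp (-(2 * (C : ℝ))⁻¹ * x ^ 2)) :=
    integrable_mul_exp_neg_mul_sq (by positivity)
  refine (key.const_mul ((√(2 * π * (C : ℝ)))⁻¹)).congr (ae_of_all _ fun x => ?_)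
  show (√(2 * π * (C : ℝ)))⁻¹ * (x * rexp (-(2 * (C : ℝ))⁻¹ * x ^ 2))
      = x * (gaussianPDF 0 C x).toReal
  rw [gaussianPDF, ENNReal.toReal_ofReal (gaussianPDFReal_nonneg _ _ _), gaussianPDFReal]
  have : -(x - 0) ^ 2 / (2 * (C : ℝ)) = -(2 * (C : ℝ))⁻¹ * x ^ 2 := by
    field_simp
    ring
  rw [this]; ring

/-- Guo–Shamai–Verdú: `X_t = √t X + √(1-t) Z` has score
`ρ_t(x) = -(1/(1-t)) C⁻¹ (x - √t E[X | X_t = x])`, expressed via conditional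
expectation: the corresponding functional of `X_t` satisfies the score identity. -/
theorem stmt11 {Ω : Type*} [MeasurableSpace Ω] (μ : Measure Ω) [IsProbabilityMeasure μ]
    (X Z : Ω → ℝ) (hX : Measurable X) (hZ : Measurable Z)
    (hX2 : MemLp X 2 μ) (hXc : ∫ ω, X ω ∂μ = 0)
    (C : ℝ≥0) (hC : 0 < C) (hVar : ∫ ω, (X ω) ^ 2 ∂μ = C)
    (hZlaw : Measure.map Z μ = ProbabilityTheory.gaussianReal 0 C)
    (hindep : IndepFun X Z μ)
    (t : ℝ) (ht : t ∈ Set.Ioo (0 : ℝ) 1)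
    (Xt : Ω → ℝ) (hXt : Xt = fun ω => Real.sqrt t * X ω + Real.sqrt (1 - t) * Z ω) :
    ∀ φ : ℝ → ℝ, ContDiff ℝ (⊤ : ℕ∞) φ → HasCompactSupport φ →
      ∫ ω, (-(1 / (1 - t)) * (C : ℝ)⁻¹ *
          (Xt ω - Real.sqrt t * MeasureTheory.condExp (MeasurableSpace.comap Xt (borel ℝ)) μ X ω))
          * φ (Xt ω) ∂μ
        = -∫ ω, deriv φ (Xt ω) ∂μ := by
  intro φ hφ hφs
  obtain ⟨B, hB⟩ := hφ.continuous.bounded_above_of_compact_support hφs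
  obtain ⟨B', hB'⟩ := (hφ.continuous_deriv (by simp)).bounded_above_of_compact_support hφs.deriv
  have ht0 : 0 < t := ht.1
  have ht1 : t < 1 := ht.2
  have h1t : (0 : ℝ) < 1 - t := by linarith
  have hb : Real.sqrt (1 - t) ≠ 0 := (Real.sqrt_pos.2 h1t).ne'
  have hC0 : ((C : ℝ)) ≠ 0 := by
    have : (0 : ℝ) < (C : ℝ) := by exact_mod_cast hC
    exact this.ne'
  have hXtm : Measurable Xt := by
    rw [hXt]; exact (hX.const_mul _).add (hZ.const_mul _)
  have hm : MeasurableSpace.comap Xt (borel ℝ) ≤ _ := hXtm.comap_le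
  haveI : SigmaFinite (μ.trim hm) := inferInstance
  -- integrability facts
  have hXint : Integrable X μ := hX2.integrable (by norm_num)
  have hνid : Integrable (fun x : ℝ => x) (gaussianReal 0 C) := gsv_integrable_id_gauss C hC
  have hZint : Integrable Z μ := by
    have hmap : AEStronglyMeasurable (fun x : ℝ => x) (Measure.map Z μ) := by
      rw [hZlaw]; exact aestronglyMeasurable_id
    exact (integrable_map_measure hmap hZ.aemeasurable).1 (by rw [hZlaw]; exact hνid)
  have hXtint : Integrable Xt μ := by
    rw [hXt]; exact (hXint.const_mul _).add (hZint.const_mul _)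
  have hφXt : AEStronglyMeasurable (fun ω => φ (Xt ω)) μ :=
    (hφ.continuous.measurable.comp hXtm).aestronglyMeasurable
  have hbd : ∀ᵐ ω ∂μ, ‖φ (Xt ω)‖ ≤ B := ae_of_all _ fun ω => hB _
  have hφX : Integrable (fun ω => φ (Xt ω) * X ω) μ := hXint.bdd_mul hφXt hbd
  have hφZ : Integrable (fun ω => φ (Xt ω) * Z ω) μ := hZint.bdd_mul hφXt hbd
  have hφXt2 : Integrable (fun ω => φ (Xt ω) * Xt ω) μ := hXtint.bdd_mul hφXt hbd
  have hcondint : Integrable (fun ω => φ (Xt ω) * (μ[X|MeasurableSpace.comap Xt (borel ℝ)]) ω) μ :=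
    integrable_condExp.bdd_mul hφXt hbd
  -- conditional expectation pull-out
  have hXtm' : Measurable[MeasurableSpace.comap Xt (borel ℝ)] Xt := Measurable.of_comap_le le_rfl
  have hgm : StronglyMeasurable[MeasurableSpace.comap Xt (borel ℝ)] (fun ω => φ (Xt ω)) :=
    (hφ.continuous.measurable.comp hXtm').stronglyMeasurable
  have hpull := condExp_stronglyMeasurable_mul_of_bound hm hgm hXint B (ae_of_all _ fun ω => hB _)
  have hcond : ∫ ω, φ (Xt ω) * (μ[X|MeasurableSpace.comap Xt (borel ℝ)]) ω ∂μ = ∫ ω, φ (Xt ω) * X ω ∂μ := by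
    calc ∫ ω, φ (Xt ω) * (μ[X|MeasurableSpace.comap Xt (borel ℝ)]) ω ∂μ
        = ∫ ω, ((fun ω => φ (Xt ω)) * μ[X|MeasurableSpace.comap Xt (borel ℝ)]) ω ∂μ := rfl
      _ = ∫ ω, (μ[(fun ω => φ (Xt ω)) * X|MeasurableSpace.comap Xt (borel ℝ)]) ω ∂μ := (integral_congr_ae hpull).symm
      _ = ∫ ω, ((fun ω => φ (Xt ω)) * X) ω ∂μ := integral_condExp hm
      _ = ∫ ω, φ (Xt ω) * X ω ∂μ := rfl
  -- Fubini + Gaussian integration by parts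
  have hprod := (ProbabilityTheory.indepFun_iff_map_prod_eq_prod_map_map
    hX.aemeasurable hZ.aemeasurable).1 hindep
  haveI : IsProbabilityMeasure (μ.map X) := Measure.isProbabilityMeasure_map hX.aemeasurable
  have hGcont : Continuous (fun p : ℝ × ℝ => Real.sqrt t * p.1 + Real.sqrt (1 - t) * p.2) :=
    (continuous_const.mul continuous_fst).add (continuous_const.mul continuous_snd)
  have hg1cont : Continuous
      (fun p : ℝ × ℝ => p.2 * φ (Real.sqrt t * p.1 + Real.sqrt (1 - t) * p.2)) :=
    continuous_snd.mul (hφ.continuous.comp hGcont)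
  have hg2cont : Continuous
      (fun p : ℝ × ℝ => deriv φ (Real.sqrt t * p.1 + Real.sqrt (1 - t) * p.2)) :=
    (hφ.continuous_deriv (by simp)).comp hGcont
  have hpairmeas : AEMeasurable (fun ω => (X ω, Z ω)) μ := (hX.prodMk hZ).aemeasurable
  have hsnd : Integrable (fun p : ℝ × ℝ => p.2) ((μ.map X).prod (gaussianReal 0 C)) := by
    have hmapsnd : ((μ.map X).prod (gaussianReal 0 C)).map Prod.snd = gaussianReal 0 C := by
      rw [Measure.map_snd_prod]; simp
    exact (integrable_map_measure (g := fun x : ℝ => x)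
      (by rw [hmapsnd]; exact aestronglyMeasurable_id) measurable_snd.aemeasurable).1
      (by rw [hmapsnd]; exact hνid)
  have hInt1 : Integrable (fun p : ℝ × ℝ => p.2 * φ (Real.sqrt t * p.1 + Real.sqrt (1 - t) * p.2))
      ((μ.map X).prod (gaussianReal 0 C)) :=
    (hsnd.bdd_mul (hφ.continuous.comp hGcont).aestronglyMeasurable (ae_of_all _ fun p => hB _)).congr
      (ae_of_all _ fun p => mul_comm _ _)
  have hInt2 : Integrable (fun p : ℝ × ℝ => deriv φ (Real.sqrt t * p.1 + Real.sqrt (1 - t) * p.2))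
      ((μ.map X).prod (gaussianReal 0 C)) :=
    ⟨hg2cont.aestronglyMeasurable, HasFiniteIntegral.of_bounded (C := B') (ae_of_all _ fun p => hB' _)⟩
  have hZφ : ∫ ω, Z ω * φ (Xt ω) ∂μ
      = ((C : ℝ) * Real.sqrt (1 - t)) * ∫ ω, deriv φ (Xt ω) ∂μ := by
    calc ∫ ω, Z ω * φ (Xt ω) ∂μ
        = ∫ p : ℝ × ℝ, p.2 * φ (Real.sqrt t * p.1 + Real.sqrt (1 - t) * p.2)
            ∂(μ.map (fun ω => (X ω, Z ω))) := by
          rw [integral_map hpairmeas hg1cont.aestronglyMeasurable]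
          simp only [hXt]
      _ = ∫ p : ℝ × ℝ, p.2 * φ (Real.sqrt t * p.1 + Real.sqrt (1 - t) * p.2)
            ∂((μ.map X).prod (gaussianReal 0 C)) := by rw [hprod, hZlaw]
      _ = ∫ x, ∫ z, z * φ (Real.sqrt t * x + Real.sqrt (1 - t) * z)
            ∂(gaussianReal 0 C) ∂(μ.map X) := by rw [integral_prod _ hInt1]
      _ = ∫ x, ((C : ℝ) * Real.sqrt (1 - t)) *
            ∫ z, deriv φ (Real.sqrt t * x + Real.sqrt (1 - t) * z)
              ∂(gaussianReal 0 C) ∂(μ.map X) := by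
          refine integral_congr_ae (ae_of_all _ fun x => ?_)
          exact gsv_gauss_ibp_affine C hC φ hφ hφs (Real.sqrt t * x) (Real.sqrt (1 - t)) hb
      _ = ((C : ℝ) * Real.sqrt (1 - t)) * ∫ x, ∫ z,
            deriv φ (Real.sqrt t * x + Real.sqrt (1 - t) * z)
              ∂(gaussianReal 0 C) ∂(μ.map X) := integral_const_mul _ _
      _ = ((C : ℝ) * Real.sqrt (1 - t)) * ∫ p : ℝ × ℝ,
            deriv φ (Real.sqrt t * p.1 + Real.sqrt (1 - t) * p.2)
              ∂((μ.map X).prod (gaussianReal 0 C)) := by rw [integral_prod _ hInt2]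
      _ = ((C : ℝ) * Real.sqrt (1 - t)) * ∫ ω, deriv φ (Xt ω) ∂μ := by
          rw [← hZlaw, ← hprod, integral_map hpairmeas hg2cont.aestronglyMeasurable]
          simp only [hXt]
  -- final assembly
  have key : ∀ ω, (-(1 / (1 - t)) * (C : ℝ)⁻¹ * (Xt ω - Real.sqrt t * (μ[X|MeasurableSpace.comap Xt (borel ℝ)]) ω)) * φ (Xt ω)
      = (-(1 / (1 - t)) * (C : ℝ)⁻¹) * (φ (Xt ω) * Xt ω)
        - (-(1 / (1 - t)) * (C : ℝ)⁻¹ * Real.sqrt t) * (φ (Xt ω) * (μ[X|MeasurableSpace.comap Xt (borel ℝ)]) ω) :=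
    fun ω => by ring
  rw [integral_congr_ae (ae_of_all _ key),
    integral_sub (hφXt2.const_mul _) (hcondint.const_mul _),
    integral_const_mul, integral_const_mul, hcond]
  have hsplit : ∫ ω, φ (Xt ω) * Xt ω ∂μ
      = Real.sqrt t * ∫ ω, φ (Xt ω) * X ω ∂μ
        + Real.sqrt (1 - t) * ∫ ω, φ (Xt ω) * Z ω ∂μ := by
    rw [← integral_const_mul, ← integral_const_mul,
      ← integral_add (hφX.const_mul _) (hφZ.const_mul _)]
    refine integral_congr_ae (ae_of_all _ fun ω => ?_)
    simp only [hXt]; ring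
  have hZφ' : ∫ ω, φ (Xt ω) * Z ω ∂μ
      = ((C : ℝ) * Real.sqrt (1 - t)) * ∫ ω, deriv φ (Xt ω) ∂μ := by
    rw [← hZφ]; exact integral_congr_ae (ae_of_all _ fun ω => mul_comm _ _)
  rw [hsplit, hZφ']
  have hss : Real.sqrt (1 - t) * Real.sqrt (1 - t) = 1 - t := Real.mul_self_sqrt h1t.le
  have halg : ∀ A D : ℝ,
      -(1 / (1 - t)) * (C : ℝ)⁻¹ *
          (Real.sqrt t * A + Real.sqrt (1 - t) * (((C : ℝ) * Real.sqrt (1 - t)) * D))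
        - (-(1 / (1 - t)) * (C : ℝ)⁻¹ * Real.sqrt t) * A
      = -((Real.sqrt (1 - t) * Real.sqrt (1 - t)) * ((C : ℝ)⁻¹ * (C : ℝ)) * (1 / (1 - t)) * D) :=
    fun A D => by ring
  rw [halg, hss, inv_mul_cancel₀ hC0, mul_one]
  field_simp
end

section
/- If W is the normalized sum W = n^{-1/2} Σ_{i=1}^n X_i of independent centered variance-one random variables X_i each admitting square-integrable Stein factor τ_i and score ρ_i, then a Stein factor for W is given by τ_W(W) = (1/n)·Σ_{i=1}^n E[τ_i(X_i) | W], i.e. E[τ_W(W)·φ'(W)] = E[W·φ(W)] for all φ ∈ C_c^∞(ℝ). -/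
open MeasureTheory ProbabilityTheory Real

section Aux

variable {Ω : Type*} [MeasurableSpace Ω] {μ : Measure Ω} [IsProbabilityMeasure μ]

/-- Stein's identity for `X` applied to a shifted/rescaled test function, integrated
against an independent variable `S`. -/
lemma stein_shift {X S : Ω → ℝ} (hXmeas : Measurable X) (hSmeas : Measurable S)
    (hI : IndepFun X S μ) (τ : ℝ → ℝ) (hτm : Measurable τ)
    (hτint : Integrable (fun ω => τ (X ω)) μ) (hXint : Integrable X μ)
    (hstein : ∀ φ : ℝ → ℝ, ContDiff ℝ (⊤ : ℕ∞) φ → HasCompactSupport φ →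
      ∫ ω, τ (X ω) * deriv φ (X ω) ∂μ = ∫ ω, X ω * φ (X ω) ∂μ)
    (c : ℝ) (hc : c ≠ 0) (φ : ℝ → ℝ) (hφ : ContDiff ℝ (⊤ : ℕ∞) φ) (hφs : HasCompactSupport φ) :
    ∫ ω, τ (X ω) * (c * deriv φ (c * (X ω + S ω))) ∂μ
      = ∫ ω, X ω * φ (c * (X ω + S ω)) ∂μ := by
  have hφcont : Continuous φ := hφ.continuous
  have hdφcont : Continuous (deriv φ) := hφ.continuous_deriv (by simp)
  obtain ⟨C0, hC0⟩ := hφs.exists_bound_of_continuous hφcont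
  obtain ⟨Cd, hCd⟩ := (hφs.deriv).exists_bound_of_continuous hdφcont
  set ν₁ : Measure ℝ := μ.map X with hν₁
  set ν₂ : Measure ℝ := μ.map S with hν₂
  haveI : IsProbabilityMeasure ν₁ := Measure.isProbabilityMeasure_map hXmeas.aemeasurable
  haveI : IsProbabilityMeasure ν₂ := Measure.isProbabilityMeasure_map hSmeas.aemeasurable
  have hmap : μ.map (fun ω => (X ω, S ω)) = ν₁.prod ν₂ :=
    (indepFun_iff_map_prod_eq_prod_map_map hXmeas.aemeasurable hSmeas.aemeasurable).mp hI
  set F : ℝ × ℝ → ℝ := fun p => τ p.1 * (c * deriv φ (c * (p.1 + p.2))) with hF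
  set G : ℝ × ℝ → ℝ := fun p => p.1 * φ (c * (p.1 + p.2)) with hG
  have hlin : Measurable fun p : ℝ × ℝ => c * (p.1 + p.2) :=
    measurable_const.mul (measurable_fst.add measurable_snd)
  have mF : Measurable F :=
    (hτm.comp measurable_fst).mul (measurable_const.mul (hdφcont.measurable.comp hlin))
  have mG : Measurable G := measurable_fst.mul (hφcont.measurable.comp hlin)
  -- integrability of the first-coordinate functions on the product
  have hτν : Integrable τ ν₁ :=
    (integrable_map_measure hτm.aestronglyMeasurable hXmeas.aemeasurable).mpr hτint
  have hidν : Integrable (fun x : ℝ => x) ν₁ :=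
    (integrable_map_measure measurable_id.aestronglyMeasurable hXmeas.aemeasurable).mpr hXint
  have hfstmap : Measure.map Prod.fst (ν₁.prod ν₂) = ν₁ := by
    rw [Measure.map_fst_prod]; simp
  have hfstτ : Integrable (fun p : ℝ × ℝ => τ p.1) (ν₁.prod ν₂) := by
    have := (integrable_map_measure hτm.aestronglyMeasurable
      measurable_fst.aemeasurable (μ := ν₁.prod ν₂)).mp (by rwa [hfstmap])
    exact this
  have hfstid : Integrable (fun p : ℝ × ℝ => p.1) (ν₁.prod ν₂) := by
    have := (integrable_map_measure measurable_id.aestronglyMeasurable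
      measurable_fst.aemeasurable (μ := ν₁.prod ν₂)).mp (by rwa [hfstmap])
    exact this
  have hFint : Integrable F (ν₁.prod ν₂) := by
    have hb : Integrable (fun p : ℝ × ℝ =>
        (c * deriv φ (c * (p.1 + p.2))) * τ p.1) (ν₁.prod ν₂) := by
      refine hfstτ.bdd_mul ((measurable_const.mul (hdφcont.measurable.comp hlin))).aestronglyMeasurable
        (c := |c| * Cd) (Filter.Eventually.of_forall fun p => ?_)
      rw [norm_mul]
      exact mul_le_mul_of_nonneg_left (hCd _) (abs_nonneg c) |>.trans_eq rfl
    exact hb.congr (Filter.Eventually.of_forall fun p => mul_comm _ _)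
  have hGint : Integrable G (ν₁.prod ν₂) := by
    have hb : Integrable (fun p : ℝ × ℝ => φ (c * (p.1 + p.2)) * p.1) (ν₁.prod ν₂) := by
      refine hfstid.bdd_mul (hφcont.measurable.comp hlin).aestronglyMeasurable
        (Filter.Eventually.of_forall fun p => hC0 _)
    exact hb.congr (Filter.Eventually.of_forall fun p => mul_comm _ _)
  -- inner identity for fixed `s`
  have hinner : ∀ s : ℝ, ∫ x, F (x, s) ∂ν₁ = ∫ x, G (x, s) ∂ν₁ := by
    intro s
    set ψ : ℝ → ℝ := fun x => φ (c * (x + s)) with hψdef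
    have hψ : ContDiff ℝ (⊤ : ℕ∞) ψ :=
      hφ.comp (contDiff_const.mul (contDiff_id.add contDiff_const))
    have hψs : HasCompactSupport ψ := by
      have e : ℝ ≃ₜ ℝ := (Homeomorph.addRight s).trans (Homeomorph.mulLeft₀ c hc)
      have := hφs.comp_homeomorph ((Homeomorph.addRight s).trans (Homeomorph.mulLeft₀ c hc))
      simpa [Function.comp_def, hψdef] using this
    have hderiv : ∀ x, deriv ψ x = c * deriv φ (c * (x + s)) := by
      intro x
      have h1 : HasDerivAt (fun y : ℝ => c * (y + s)) c x := by
        simpa using ((hasDerivAt_id x).add_const s).const_mul c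
      have h2 : HasDerivAt φ (deriv φ (c * (x + s))) (c * (x + s)) :=
        ((hφ.differentiable (by simp)) _).hasDerivAt
      have h3 := h2.comp x h1
      exact h3.deriv.trans (mul_comm _ _)
    have hmeasF : Measurable fun x : ℝ => F (x, s) :=
      mF.comp (measurable_id.prodMk measurable_const)
    have hmeasG : Measurable fun x : ℝ => G (x, s) :=
      mG.comp (measurable_id.prodMk measurable_const)
    calc ∫ x, F (x, s) ∂ν₁ = ∫ ω, F (X ω, s) ∂μ := by
          rw [hν₁, integral_map hXmeas.aemeasurable hmeasF.aestronglyMeasurable]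
      _ = ∫ ω, τ (X ω) * deriv ψ (X ω) ∂μ := by
          simp only [hF, hderiv]
      _ = ∫ ω, X ω * ψ (X ω) ∂μ := hstein ψ hψ hψs
      _ = ∫ ω, G (X ω, s) ∂μ := rfl
      _ = ∫ x, G (x, s) ∂ν₁ := by
          rw [hν₁, integral_map hXmeas.aemeasurable hmeasG.aestronglyMeasurable]
  calc ∫ ω, τ (X ω) * (c * deriv φ (c * (X ω + S ω))) ∂μ
      = ∫ ω, F (X ω, S ω) ∂μ := rfl
    _ = ∫ p, F p ∂(μ.map (fun ω => (X ω, S ω))) :=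
        (integral_map (hXmeas.prodMk hSmeas).aemeasurable mF.aestronglyMeasurable).symm
    _ = ∫ p, F p ∂(ν₁.prod ν₂) := by rw [hmap]
    _ = ∫ s, ∫ x, F (x, s) ∂ν₁ ∂ν₂ := integral_prod_symm F hFint
    _ = ∫ s, ∫ x, G (x, s) ∂ν₁ ∂ν₂ := by
        exact integral_congr_ae (Filter.Eventually.of_forall fun s => hinner s)
    _ = ∫ p, G p ∂(ν₁.prod ν₂) := (integral_prod_symm G hGint).symm
    _ = ∫ p, G p ∂(μ.map (fun ω => (X ω, S ω))) := by rw [hmap]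
    _ = ∫ ω, G (X ω, S ω) ∂μ :=
        integral_map (hXmeas.prodMk hSmeas).aemeasurable mG.aestronglyMeasurable
    _ = ∫ ω, X ω * φ (c * (X ω + S ω)) ∂μ := rfl

end Aux

set_option maxHeartbeats 1000000 in
/-- A Stein factor for the normalized sum `W = n^{-1/2} ∑ X_i` is
`τ_W(W) = (1/n) ∑ E[τ_i(X_i) | W]`. -/
theorem stmt16 {Ω : Type*} [MeasurableSpace Ω] (μ : Measure Ω) [IsProbabilityMeasure μ]
    (n : ℕ) (hn : 0 < n) (X : Fin n → Ω → ℝ)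
    (hXm : ∀ i, Measurable (X i))
    (hindep : iIndepFun X μ)
    (hc : ∀ i, ∫ ω, X i ω ∂μ = 0) (hv : ∀ i, ∫ ω, (X i ω) ^ 2 ∂μ = 1)
    (ρ τ : Fin n → ℝ → ℝ) (hρm : ∀ i, Measurable (ρ i)) (hτm : ∀ i, Measurable (τ i))
    (hτ2 : ∀ i, MemLp (fun ω => τ i (X i ω)) 2 μ)
    (hscore : ∀ i, ∀ φ : ℝ → ℝ, ContDiff ℝ (⊤ : ℕ∞) φ → HasCompactSupport φ →
      ∫ ω, ρ i (X i ω) * φ (X i ω) ∂μ = -∫ ω, deriv φ (X i ω) ∂μ)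
    (hstein : ∀ i, ∀ φ : ℝ → ℝ, ContDiff ℝ (⊤ : ℕ∞) φ → HasCompactSupport φ →
      ∫ ω, τ i (X i ω) * deriv φ (X i ω) ∂μ = ∫ ω, X i ω * φ (X i ω) ∂μ)
    (W : Ω → ℝ) (hW : W = fun ω => (n : ℝ) ^ (-(1 : ℝ)/2) * ∑ i, X i ω) :
    ∀ φ : ℝ → ℝ, ContDiff ℝ (⊤ : ℕ∞) φ → HasCompactSupport φ →
      ∫ ω, ((1 / (n : ℝ)) * ∑ i,
          MeasureTheory.condExp (MeasurableSpace.comap W (borel ℝ)) μ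
            (fun ω => τ i (X i ω)) ω) * deriv φ (W ω) ∂μ
        = ∫ ω, W ω * φ (W ω) ∂μ := by
  intro φ hφ hφs
  -- basic constants
  have hnpos : (0 : ℝ) < n := by exact_mod_cast hn
  set c : ℝ := (n : ℝ) ^ (-(1 : ℝ)/2) with hcdef
  have hcpos : 0 < c := Real.rpow_pos_of_pos hnpos _
  have hcne : c ≠ 0 := ne_of_gt hcpos
  have hcc : c * c = ((n : ℝ))⁻¹ := by
    rw [hcdef, ← Real.rpow_add hnpos]
    norm_num [Real.rpow_neg_one]
  -- measurability of W
  have hWm : Measurable W := by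
    rw [hW]; exact measurable_const.mul (Finset.measurable_sum _ fun i _ => hXm i)
  have hm : MeasurableSpace.comap W (borel ℝ) ≤ (inferInstance : MeasurableSpace Ω) := by
    have heq : (borel ℝ) = (inferInstance : MeasurableSpace ℝ) :=
      (BorelSpace.measurable_eq (α := ℝ)).symm
    rw [heq]
    exact hWm.comap_le
  haveI hfin : IsFiniteMeasure (μ.trim hm) := isFiniteMeasure_trim hm
  have hWm2 : Measurable[MeasurableSpace.comap W (borel ℝ)] W := fun s hs =>
    ⟨s, (BorelSpace.measurable_eq (α := ℝ)) ▸ hs, rfl⟩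
  -- test function bounds
  have hφcont : Continuous φ := hφ.continuous
  have hdφcont : Continuous (deriv φ) := hφ.continuous_deriv (by simp)
  obtain ⟨C0, hC0⟩ := hφs.exists_bound_of_continuous hφcont
  obtain ⟨Cd, hCd⟩ := (hφs.deriv).exists_bound_of_continuous hdφcont
  set g : Ω → ℝ := fun ω => deriv φ (W ω) with hgdef
  have hg_sm : StronglyMeasurable[MeasurableSpace.comap W (borel ℝ)] g :=
    (hdφcont.measurable.comp hWm2).stronglyMeasurable
  have hgmeas : AEStronglyMeasurable g μ :=
    (hdφcont.measurable.comp hWm).aestronglyMeasurable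
  have hφWmeas : AEStronglyMeasurable (fun ω => φ (W ω)) μ :=
    (hφcont.measurable.comp hWm).aestronglyMeasurable
  -- integrability of X i
  have hXint : ∀ i, Integrable (X i) μ := by
    intro i
    have hsq : Integrable (fun ω => (X i ω) ^ 2) μ := by
      by_contra h
      have h1 := hv i
      rw [integral_undef h] at h1
      exact one_ne_zero h1.symm
    have : MemLp (X i) 2 μ := by
      rw [memLp_two_iff_integrable_sq (hXm i).aestronglyMeasurable]
      simpa [sq] using hsq
    exact this.integrable one_le_two
  have hτint : ∀ i, Integrable (fun ω => τ i (X i ω)) μ := fun i =>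
    (hτ2 i).integrable one_le_two
  -- product integrability
  have hτg_int : ∀ i, Integrable (fun ω => τ i (X i ω) * g ω) μ := by
    intro i
    have hb : Integrable (fun ω => g ω * τ i (X i ω)) μ :=
      (hτint i).bdd_mul hgmeas (Filter.Eventually.of_forall fun ω => hCd _)
    exact hb.congr (Filter.Eventually.of_forall fun ω => mul_comm _ _)
  have hXφ_int : ∀ i, Integrable (fun ω => X i ω * φ (W ω)) μ := by
    intro i
    have hb : Integrable (fun ω => φ (W ω) * X i ω) μ :=
      (hXint i).bdd_mul hφWmeas (Filter.Eventually.of_forall fun ω => hC0 _)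
    exact hb.congr (Filter.Eventually.of_forall fun ω => mul_comm _ _)
  -- pull-out property
  have hpull : ∀ i,
      ∫ ω, (μ[fun ω => τ i (X i ω)|MeasurableSpace.comap W (borel ℝ)]) ω * g ω ∂μ = ∫ ω, τ i (X i ω) * g ω ∂μ := by
    intro i
    have hfg : Integrable (g * fun ω => τ i (X i ω)) μ := by
      exact (hτint i).bdd_mul hgmeas (Filter.Eventually.of_forall fun ω => hCd _)
    have h1 : μ[g * fun ω => τ i (X i ω)|MeasurableSpace.comap W (borel ℝ)] =ᵐ[μ] g * μ[fun ω => τ i (X i ω)|MeasurableSpace.comap W (borel ℝ)] :=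
      condExp_mul_of_stronglyMeasurable_left hg_sm hfg (hτint i)
    calc ∫ ω, (μ[fun ω => τ i (X i ω)|MeasurableSpace.comap W (borel ℝ)]) ω * g ω ∂μ
        = ∫ ω, (g * μ[fun ω => τ i (X i ω)|MeasurableSpace.comap W (borel ℝ)]) ω ∂μ := by
          congr 1; ext ω; exact mul_comm _ _
      _ = ∫ ω, (μ[g * fun ω => τ i (X i ω)|MeasurableSpace.comap W (borel ℝ)]) ω ∂μ := (integral_congr_ae h1).symm
      _ = ∫ ω, (g * fun ω => τ i (X i ω)) ω ∂μ := integral_condExp hm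
      _ = ∫ ω, τ i (X i ω) * g ω ∂μ := by
          congr 1; ext ω; exact mul_comm _ _
  -- key Stein identity per coordinate
  have hkey : ∀ i, c * ∫ ω, τ i (X i ω) * g ω ∂μ = ∫ ω, X i ω * φ (W ω) ∂μ := by
    intro i
    set S : Ω → ℝ := fun ω => ∑ j ∈ Finset.univ.erase i, X j ω with hSdef
    have hSm : Measurable S := Finset.measurable_sum _ fun j _ => hXm j
    have hWeq : ∀ ω, c * (X i ω + S ω) = W ω := by
      intro ω
      rw [hW]
      simp only
      congr 1
      exact Finset.add_sum_erase Finset.univ (fun j => X j ω) (Finset.mem_univ i)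
    have hI : IndepFun (X i) S μ := by
      have h := (hindep.indepFun_finsetSum_of_notMem hXm
        (Finset.notMem_erase i Finset.univ)).symm
      have hfun : (∑ j ∈ Finset.univ.erase i, X j) = S := by
        ext ω; rw [hSdef]; simp [Finset.sum_apply]
      rwa [hfun] at h
    have := stein_shift (hXm i) hSm hI (τ i) (hτm i) (hτint i) (hXint i)
      (hstein i) c hcne φ hφ hφs
    calc c * ∫ ω, τ i (X i ω) * g ω ∂μ
        = ∫ ω, c * (τ i (X i ω) * g ω) ∂μ := (integral_const_mul c _).symm
      _ = ∫ ω, τ i (X i ω) * (c * deriv φ (c * (X i ω + S ω))) ∂μ := by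
          congr 1; ext ω; rw [hWeq ω, hgdef]; ring
      _ = ∫ ω, X i ω * φ (c * (X i ω + S ω)) ∂μ := this
      _ = ∫ ω, X i ω * φ (W ω) ∂μ := by
          congr 1; ext ω; rw [hWeq ω]
  -- assemble
  have hsum1 : ∫ ω, ((1 / (n : ℝ)) * ∑ i, (μ[fun ω => τ i (X i ω)|MeasurableSpace.comap W (borel ℝ)]) ω) * g ω ∂μ
      = ∑ i, (1 / (n : ℝ)) * ∫ ω, (μ[fun ω => τ i (X i ω)|MeasurableSpace.comap W (borel ℝ)]) ω * g ω ∂μ := by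
    have hint : ∀ i : Fin n, Integrable
        (fun ω => (1 / (n : ℝ)) * ((μ[fun ω => τ i (X i ω)|MeasurableSpace.comap W (borel ℝ)]) ω * g ω)) μ := by
      intro i
      have hb : Integrable (fun ω => g ω * (μ[fun ω => τ i (X i ω)|MeasurableSpace.comap W (borel ℝ)]) ω) μ :=
        integrable_condExp.bdd_mul hgmeas (Filter.Eventually.of_forall fun ω => hCd _)
      exact ((hb.congr (Filter.Eventually.of_forall fun ω => mul_comm _ _)).const_mul _)
    calc ∫ ω, ((1 / (n : ℝ)) * ∑ i, (μ[fun ω => τ i (X i ω)|MeasurableSpace.comap W (borel ℝ)]) ω) * g ω ∂μ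
        = ∫ ω, ∑ i, (1 / (n : ℝ)) * ((μ[fun ω => τ i (X i ω)|MeasurableSpace.comap W (borel ℝ)]) ω * g ω) ∂μ := by
          congr 1; ext ω; rw [Finset.mul_sum, Finset.sum_mul]
          exact Finset.sum_congr rfl fun i _ => by ring
      _ = ∑ i, ∫ ω, (1 / (n : ℝ)) * ((μ[fun ω => τ i (X i ω)|MeasurableSpace.comap W (borel ℝ)]) ω * g ω) ∂μ :=
          integral_finset_sum _ fun i _ => hint i
      _ = ∑ i, (1 / (n : ℝ)) * ∫ ω, (μ[fun ω => τ i (X i ω)|MeasurableSpace.comap W (borel ℝ)]) ω * g ω ∂μ :=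
          Finset.sum_congr rfl fun i _ => integral_const_mul _ _
  rw [hsum1]
  have hstep : ∀ i : Fin n, (1 / (n : ℝ)) * ∫ ω, (μ[fun ω => τ i (X i ω)|MeasurableSpace.comap W (borel ℝ)]) ω * g ω ∂μ
      = c * ∫ ω, X i ω * φ (W ω) ∂μ := by
    intro i
    rw [hpull i, ← hkey i]
    have : (1 / (n : ℝ)) = c * c := by rw [hcc]; exact (one_div _)
    rw [this]; ring
  rw [Finset.sum_congr rfl fun i _ => hstep i, ← Finset.mul_sum]
  have hsum2 : ∑ i, ∫ ω, X i ω * φ (W ω) ∂μ = ∫ ω, (∑ i, X i ω) * φ (W ω) ∂μ := by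
    rw [← integral_finset_sum _ fun i _ => hXφ_int i]
    congr 1; ext ω; rw [Finset.sum_mul]
  rw [hsum2]
  rw [← integral_const_mul]
  congr 1; ext ω
  rw [hW]; simp only; ring
end
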